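/- arXiv:2301.01744 — 5 statements merged into one kernel-verified Lean document; each statement's English description precedes it below -/
import Mathlib

section
/- Let t > 0, W ≥ 1, δ > 0, and let g : [0,t] → W∞ be a monotone piecewise constant function, where W∞ := {0} ∪ [1,W] ∪ {+∞}. Then the rounded function ⌈g⌉_{1+δ} (defined pointwise) satisfies: (i) g(x) ≤ ⌈g⌉_{1+δ}(x) ≤ (1+δ)·g(x) for every x ∈ [0,t]; (ii) ⌈g⌉_{1+δ} is a monotone piecewise constant function with at most ⌈log_{1+δ}(W)⌉ + 3 pieces. -/
/-!
Rounding up is monotone, and for `0 < y ≤ W` it returns the least power `(1+δ)^i ≥ y`; then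
`i ≤ ⌈log_{1+δ} W⌉` and, if `1 ≤ y`, also `(1+δ)^(i-1) ≤ y`, which gives `⌈y⌉ ≤ (1+δ) y`.
So `⌈g⌉` is monotone, piecewise constant on the partition of `g`, and takes at most
`⌈log_{1+δ} W⌉ + 3` values (`0`, `∞` and the powers `(1+δ)^0, …, (1+δ)^N`). Deleting the
breakpoints at which a monotone step function does not jump leaves pieces with pairwise distinct
values, so there are at most as many pieces as values.
-/

open scoped ENNReal

/-- `f : [0,t] → [0,+∞]` is piecewise constant with `p` pieces. -/
def IsPiecewiseConstant (t : ℝ) (f : ℝ → ℝ≥0∞) (p : ℕ) : Prop :=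
  0 < p ∧ ∃ (x : ℕ → ℝ) (y : ℕ → ℝ≥0∞),
    x 0 = 0 ∧ x p = t ∧ (∀ i, i < p → x i < x (i + 1)) ∧
    (∀ i, i < p → ∀ z ∈ Set.Ico (x i) (x (i + 1)), f z = y (i + 1)) ∧
    f t = y p

/-- Rounding up to the smallest power of `1+δ` that is at least `y`, with the
conventions `⌈0⌉ = 0` and `⌈∞⌉ = ∞`. -/
noncomputable def roundUpPow (δ : ℝ) (y : ℝ≥0∞) : ℝ≥0∞ :=
  if y = 0 then 0
  else if y = ⊤ then ⊤
  else sInf {z : ℝ≥0∞ | ∃ i : ℕ, z = ENNReal.ofReal ((1 + δ) ^ i) ∧ y ≤ z}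

theorem Real.le_pow_natCeil_logb {b : ℝ} (hb : 1 < b) (x : ℝ) : x ≤ b ^ ⌈Real.logb b x⌉₊ := by
  rcases le_or_gt x 0 with hx | hx
  · exact hx.trans (by positivity)
  · rw [← Real.rpow_natCast, ← Real.logb_le_iff_le_rpow hb hx]
    exact Nat.le_ceil _

theorem eq_of_monotoneOn_or_antitoneOn {α β : Type*} [Preorder α] [PartialOrder β]
    {f : α → β} {s : Set α} (hf : MonotoneOn f s ∨ AntitoneOn f s) {a b c : α}
    (ha : a ∈ s) (hb : b ∈ s) (hc : c ∈ s) (hab : a ≤ b) (hbc : b ≤ c) (hac : f a = f c) :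
    f b = f a := by
  rcases hf with hf | hf
  · exact le_antisymm (hac ▸ hf hb hc hbc) (hf ha hb hab)
  · exact le_antisymm (hf ha hb hab) (hac ▸ hf hb hc hbc)

section roundUpPow

variable {δ : ℝ}

theorem roundUpPow_zero : roundUpPow δ 0 = 0 := by simp [roundUpPow]

theorem roundUpPow_top : roundUpPow δ ⊤ = ⊤ := by simp [roundUpPow]

theorem le_roundUpPow (δ : ℝ) (y : ℝ≥0∞) : y ≤ roundUpPow δ y := by
  unfold roundUpPow
  split_ifs with h0 htop
  · simp [h0]
  · simp [htop]
  · exact le_sInf fun _ ⟨_, _, hz⟩ => hz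

theorem roundUpPow_mono (δ : ℝ) : Monotone (roundUpPow δ) := by
  intro a b hab
  rcases eq_or_ne a 0 with rfl | ha0
  · simp [roundUpPow_zero]
  rcases eq_or_ne b ⊤ with rfl | hbt
  · simp [roundUpPow_top]
  have hb0 : b ≠ 0 := ne_bot_of_le_ne_bot ha0 hab
  have hat : a ≠ ⊤ := ne_top_of_le_ne_top hbt hab
  simp only [roundUpPow, if_neg ha0, if_neg hb0, if_neg hat, if_neg hbt]
  exact sInf_le_sInf fun _ ⟨i, hz, hbz⟩ => ⟨i, hz, hab.trans hbz⟩

theorem exists_le_ofReal_pow (hδ : 0 < δ) {y : ℝ≥0∞} (hy : y ≠ ⊤) :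
    ∃ i : ℕ, y ≤ ENNReal.ofReal ((1 + δ) ^ i) := by
  obtain ⟨i, hi⟩ := pow_unbounded_of_one_lt y.toReal (lt_add_of_pos_right 1 hδ)
  exact ⟨i, (ENNReal.le_ofReal_iff_toReal_le hy (by positivity)).2 hi.le⟩

theorem roundUpPow_eq_find (hδ : 0 < δ) {y : ℝ≥0∞} (hy0 : y ≠ 0) (hyt : y ≠ ⊤) :
    roundUpPow δ y = ENNReal.ofReal ((1 + δ) ^ Nat.find (exists_le_ofReal_pow hδ hyt)) := by
  rw [roundUpPow, if_neg hy0, if_neg hyt]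
  refine IsLeast.csInf_eq ⟨⟨_, rfl, Nat.find_spec (exists_le_ofReal_pow hδ hyt)⟩, ?_⟩
  rintro _ ⟨i, rfl, hi⟩
  exact ENNReal.ofReal_le_ofReal (pow_le_pow_right₀ (by linarith) (Nat.find_min' _ hi))

theorem roundUpPow_le_mul (hδ : 0 < δ) {y : ℝ≥0∞} (hy : 1 ≤ y) :
    roundUpPow δ y ≤ ENNReal.ofReal (1 + δ) * y := by
  rcases eq_or_ne y ⊤ with rfl | hyt
  · rw [ENNReal.mul_top (ENNReal.ofReal_pos.2 (by linarith)).ne']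
    exact le_top
  rw [roundUpPow_eq_find hδ (zero_lt_one.trans_le hy).ne' hyt]
  set i := Nat.find (exists_le_ofReal_pow hδ hyt)
  -- by minimality of `i`, the previous power lies below `y` (for `i = 0` it is `1 ≤ y`)
  have hprev : ENNReal.ofReal ((1 + δ) ^ (i - 1)) ≤ y := by
    rcases Nat.eq_zero_or_pos i with hi | hi
    · simpa [hi] using hy
    · exact (not_le.1 (Nat.find_min (exists_le_ofReal_pow hδ hyt) (Nat.sub_lt hi one_pos))).le
  calc ENNReal.ofReal ((1 + δ) ^ i)
      ≤ ENNReal.ofReal ((1 + δ) ^ (i - 1 + 1)) :=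
        ENNReal.ofReal_le_ofReal (pow_le_pow_right₀ (by linarith) (by omega))
    _ = ENNReal.ofReal (1 + δ) * ENNReal.ofReal ((1 + δ) ^ (i - 1)) := by
        rw [pow_succ', ENNReal.ofReal_mul (by linarith)]
    _ ≤ ENNReal.ofReal (1 + δ) * y := by gcongr

noncomputable def roundingValues (δ : ℝ) (N : ℕ) : Finset ℝ≥0∞ :=
  insert 0 (insert ⊤ ((Finset.range (N + 1)).image fun i => ENNReal.ofReal ((1 + δ) ^ i)))

theorem card_roundingValues_le (δ : ℝ) (N : ℕ) : (roundingValues δ N).card ≤ N + 3 := by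
  have himage := (Finset.card_image_le (s := Finset.range (N + 1))
    (f := fun i => ENNReal.ofReal ((1 + δ) ^ i))).trans (Finset.card_range _).le
  have := Finset.card_insert_le (⊤ : ℝ≥0∞)
    ((Finset.range (N + 1)).image fun i => ENNReal.ofReal ((1 + δ) ^ i))
  exact (Finset.card_insert_le _ _).trans (by omega)

theorem roundUpPow_mem_roundingValues (hδ : 0 < δ) {W : ℝ} {y : ℝ≥0∞}
    (hy : y = ⊤ ∨ y ≤ ENNReal.ofReal W) :
    roundUpPow δ y ∈ roundingValues δ ⌈Real.logb (1 + δ) W⌉₊ := by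
  rcases hy with rfl | hyW
  · simp [roundingValues, roundUpPow_top]
  rcases eq_or_ne y 0 with rfl | hy0
  · simp [roundingValues, roundUpPow_zero]
  have hyt : y ≠ ⊤ := ne_top_of_le_ne_top ENNReal.ofReal_ne_top hyW
  have hpow : y ≤ ENNReal.ofReal ((1 + δ) ^ ⌈Real.logb (1 + δ) W⌉₊) :=
    hyW.trans (ENNReal.ofReal_le_ofReal (Real.le_pow_natCeil_logb (by linarith) W))
  rw [roundUpPow_eq_find hδ hy0 hyt, roundingValues]
  exact Finset.mem_insert_of_mem <| Finset.mem_insert_of_mem <| Finset.mem_image_of_mem _ <|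
    Finset.mem_range.2 <| Nat.lt_succ_of_le <| Nat.find_min' _ hpow

end roundUpPow

structure IsStepPartition {β : Type*} (t : ℝ) (f : ℝ → β) (p : ℕ) (x : ℕ → ℝ) : Prop where
  pos : 0 < p
  map_zero : x 0 = 0
  map_last : x p = t
  lt_succ : ∀ i < p, x i < x (i + 1)
  eq_on_piece : ∀ i < p, ∀ z ∈ Set.Ico (x i) (x (i + 1)), f z = f (x i)
  apply_last : f t = f (x (p - 1))

theorem isPiecewiseConstant_iff {t : ℝ} {f : ℝ → ℝ≥0∞} {p : ℕ} :
    IsPiecewiseConstant t f p ↔ ∃ x, IsStepPartition t f p x := by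
  constructor
  · rintro ⟨hp, x, y, hx0, hxp, hlt, hpiece, hft⟩
    have hleft : ∀ i < p, f (x i) = y (i + 1) := fun i hi =>
      hpiece i hi (x i) ⟨le_rfl, hlt i hi⟩
    refine ⟨x, hp, hx0, hxp, hlt, fun i hi z hz => (hpiece i hi z hz).trans (hleft i hi).symm, ?_⟩
    rw [hft, hleft _ (by omega), Nat.sub_add_cancel hp]
  · rintro ⟨x, hp, hx0, hxp, hlt, hpiece, hft⟩
    exact ⟨hp, x, fun i => f (x (i - 1)), hx0, hxp, hlt, by simpa using hpiece, hft⟩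

namespace IsStepPartition

variable {β : Type*} {t : ℝ} {f : ℝ → β} {p : ℕ} {x : ℕ → ℝ}

theorem monotoneOn (h : IsStepPartition t f p x) : MonotoneOn x (Set.Iic p) := by
  intro i _ j hj hij
  induction j, hij using Nat.le_induction with
  | base => exact le_rfl
  | succ j _ ih => exact (ih (Nat.le_of_succ_le hj)).trans (h.lt_succ j hj).le

theorem mem_Icc (h : IsStepPartition t f p x) {i : ℕ} (hi : i ≤ p) : x i ∈ Set.Icc 0 t :=
  ⟨h.map_zero ▸ h.monotoneOn (Nat.zero_le p) hi (Nat.zero_le i),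
    h.map_last ▸ h.monotoneOn hi (le_refl p) hi⟩

theorem erase_breakpoint (h : IsStepPartition t f (p + 1) x) {k : ℕ} (hk : k < p)
    (hflat : f (x (k + 1)) = f (x k)) :
    IsStepPartition t f p (fun i => if i ≤ k then x i else x (i + 1)) where
  pos := by omega
  map_zero := by simp [h.map_zero]
  map_last := by simp [show ¬p ≤ k by omega, h.map_last]
  lt_succ i hi := by
    rcases lt_trichotomy i k with hik | rfl | hik
    · simpa [hik.le, Nat.succ_le_of_lt hik] using h.lt_succ i (by omega)
    · simpa using (h.lt_succ i (by omega)).trans (h.lt_succ (i + 1) (by omega))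
    · simpa [show ¬i ≤ k by omega, show ¬i + 1 ≤ k by omega] using h.lt_succ (i + 1) (by omega)
  eq_on_piece i hi z hz := by
    rcases lt_trichotomy i k with hik | rfl | hik
    · simp only [hik.le, Nat.succ_le_of_lt hik, if_true] at hz ⊢
      exact h.eq_on_piece i (by omega) z hz
    · simp only [le_refl, if_true, show ¬i + 1 ≤ i by omega, if_false] at hz ⊢
      rcases lt_or_ge z (x (i + 1)) with hz1 | hz1
      · exact h.eq_on_piece i (by omega) z ⟨hz.1, hz1⟩
      · exact (h.eq_on_piece (i + 1) (by omega) z ⟨hz1, hz.2⟩).trans hflat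
    · simp only [show ¬i ≤ k by omega, show ¬i + 1 ≤ k by omega, if_false] at hz ⊢
      exact h.eq_on_piece (i + 1) (by omega) z hz
  apply_last := by
    rw [h.apply_last, Nat.add_sub_cancel]
    split_ifs with hpk
    · obtain rfl : p = k + 1 := by omega
      exact hflat
    · congr 2
      omega

theorem card_le [PartialOrder β] (h : IsStepPartition t f p x)
    (hf : MonotoneOn f (Set.Icc 0 t) ∨ AntitoneOn f (Set.Icc 0 t))
    {V : Finset β} (hV : Set.MapsTo f (Set.Icc 0 t) V)
    (hjump : ∀ k, k + 1 < p → f (x (k + 1)) ≠ f (x k)) : p ≤ V.card := by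
  -- a repeated value `f (x i) = f (x j)` with `i < j` would force a constant step at `i + 1`
  have hne : ∀ i j, i < j → j < p → f (x i) ≠ f (x j) := fun i j hij hj hval =>
    hjump i (by omega) <| eq_of_monotoneOn_or_antitoneOn hf (h.mem_Icc (by omega))
      (h.mem_Icc (by omega)) (h.mem_Icc hj.le) (h.monotoneOn (show i ≤ p by omega) (show i + 1 ≤ p by omega) (by omega))
      (h.monotoneOn (show i + 1 ≤ p by omega) hj.le hij) hval
  calc p = (Finset.range p).card := (Finset.card_range p).symm
    _ ≤ V.card := by
      refine Finset.card_le_card_of_injOn (fun i => f (x i))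
        (fun i hi => hV (h.mem_Icc (Finset.mem_range.1 hi).le)) fun i hi j hj hij => ?_
      rw [Finset.coe_range, Set.mem_Iio] at hi hj
      by_contra hne'
      rcases Nat.lt_or_gt_of_ne hne' with hlt | hlt
      · exact hne i j hlt hj hij
      · exact hne j i hlt hi hij.symm

theorem exists_card_le [PartialOrder β] (h : IsStepPartition t f p x)
    (hf : MonotoneOn f (Set.Icc 0 t) ∨ AntitoneOn f (Set.Icc 0 t))
    {V : Finset β} (hV : Set.MapsTo f (Set.Icc 0 t) V) :
    ∃ q ≤ V.card, ∃ y, IsStepPartition t f q y := by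
  induction p generalizing x with
  | zero => exact absurd h.pos (lt_irrefl 0)
  | succ p ih =>
    by_cases hjump : ∀ k, k + 1 < p + 1 → f (x (k + 1)) ≠ f (x k)
    · exact ⟨p + 1, h.card_le hf hV hjump, x, h⟩
    · push Not at hjump
      obtain ⟨k, hk, heq⟩ := hjump
      exact ih (h.erase_breakpoint (by omega) heq)

end IsStepPartition

theorem IsPiecewiseConstant.comp {t : ℝ} {f : ℝ → ℝ≥0∞} {p : ℕ} (h : IsPiecewiseConstant t f p)
    (φ : ℝ≥0∞ → ℝ≥0∞) : IsPiecewiseConstant t (φ ∘ f) p := by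
  obtain ⟨hp, x, y, hx0, hxp, hlt, hpiece, hft⟩ := h
  exact ⟨hp, x, φ ∘ y, hx0, hxp, hlt, fun i hi z hz => congrArg φ (hpiece i hi z hz),
    congrArg φ hft⟩

theorem IsPiecewiseConstant.exists_card_le {t : ℝ} {f : ℝ → ℝ≥0∞} {q : ℕ}
    (h : IsPiecewiseConstant t f q)
    (hf : MonotoneOn f (Set.Icc 0 t) ∨ AntitoneOn f (Set.Icc 0 t))
    {V : Finset ℝ≥0∞} (hV : Set.MapsTo f (Set.Icc 0 t) V) :
    ∃ p ≤ V.card, IsPiecewiseConstant t f p := by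
  obtain ⟨x, hx⟩ := isPiecewiseConstant_iff.1 h
  obtain ⟨p, hp, y, hy⟩ := hx.exists_card_le hf hV
  exact ⟨p, hp, isPiecewiseConstant_iff.2 ⟨y, hy⟩⟩

theorem roundUpPow_of_monotone_piecewiseConstant_general
    (t W δ : ℝ) (hδ : 0 < δ)
    (g : ℝ → ℝ≥0∞) (pg : ℕ)
    (hg : IsPiecewiseConstant t g pg)
    (hgmono : MonotoneOn g (Set.Icc 0 t) ∨ AntitoneOn g (Set.Icc 0 t))
    (hval : ∀ x ∈ Set.Icc (0 : ℝ) t,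
      g x = 0 ∨ g x = ⊤ ∨ (1 ≤ g x ∧ g x ≤ ENNReal.ofReal W)) :
    (∀ x ∈ Set.Icc (0 : ℝ) t,
      g x ≤ roundUpPow δ (g x) ∧
      roundUpPow δ (g x) ≤ ENNReal.ofReal (1 + δ) * g x) ∧
    ((MonotoneOn (fun x => roundUpPow δ (g x)) (Set.Icc 0 t) ∨
      AntitoneOn (fun x => roundUpPow δ (g x)) (Set.Icc 0 t)) ∧
     ∃ p ≤ ⌈Real.logb (1 + δ) W⌉₊ + 3,
       IsPiecewiseConstant t (fun x => roundUpPow δ (g x)) p) := by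
  have hmono : MonotoneOn (roundUpPow δ ∘ g) (Set.Icc 0 t) ∨
      AntitoneOn (roundUpPow δ ∘ g) (Set.Icc 0 t) :=
    hgmono.imp (roundUpPow_mono δ).comp_monotoneOn (roundUpPow_mono δ).comp_antitoneOn
  have hmaps : Set.MapsTo (roundUpPow δ ∘ g) (Set.Icc 0 t)
      (roundingValues δ ⌈Real.logb (1 + δ) W⌉₊) := fun x hx => by
    refine roundUpPow_mem_roundingValues hδ ?_
    rcases hval x hx with h0 | htop | ⟨-, hW⟩
    exacts [Or.inr (h0 ▸ zero_le), Or.inl htop, Or.inr hW]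
  refine ⟨fun x hx => ⟨le_roundUpPow δ (g x), ?_⟩, hmono, ?_⟩
  · rcases hval x hx with h0 | htop | ⟨h1, -⟩
    · simp [h0, roundUpPow_zero]
    · exact roundUpPow_le_mul hδ (htop ▸ le_top)
    · exact roundUpPow_le_mul hδ h1
  · obtain ⟨p, hp, hpc⟩ := (hg.comp (roundUpPow δ)).exists_card_le hmono hmaps
    exact ⟨p, hp.trans (card_roundingValues_le δ _), hpc⟩

theorem roundUpPow_of_monotone_piecewiseConstant
    (t W δ : ℝ) (ht : 0 < t) (hW : 1 ≤ W) (hδ : 0 < δ)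
    (g : ℝ → ℝ≥0∞) (pg : ℕ)
    (hg : IsPiecewiseConstant t g pg)
    (hgmono : MonotoneOn g (Set.Icc 0 t) ∨ AntitoneOn g (Set.Icc 0 t))
    (hval : ∀ x ∈ Set.Icc (0 : ℝ) t,
      g x = 0 ∨ g x = ⊤ ∨ (1 ≤ g x ∧ g x ≤ ENNReal.ofReal W)) :
    (∀ x ∈ Set.Icc (0 : ℝ) t,
      g x ≤ roundUpPow δ (g x) ∧
      roundUpPow δ (g x) ≤ ENNReal.ofReal (1 + δ) * g x) ∧
    ((MonotoneOn (fun x => roundUpPow δ (g x)) (Set.Icc 0 t) ∨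
      AntitoneOn (fun x => roundUpPow δ (g x)) (Set.Icc 0 t)) ∧
     ∃ p ≤ ⌈Real.logb (1 + δ) W⌉₊ + 3,
       IsPiecewiseConstant t (fun x => roundUpPow δ (g x)) p) :=
  roundUpPow_of_monotone_piecewiseConstant_general t W δ hδ g pg hg hgmono hval
end

section
/- Let t > 0 and let f₁, f₂ : [0,t] → [0,+∞] be piecewise constant functions. Then for every x ∈ [0,t] the infimum defining the (min,+)-convolution is attained: there exists x̄* ∈ [0,x] such that (f₁ ⊕ f₂)(x) = f₁(x̄*) + f₂(x − x̄*). -/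
/-! A piecewise constant function takes only finitely many values on `[0,t]`, so the function
`x̄ ↦ f₁(x̄) + f₂(x - x̄)` takes only finitely many values on `[0,x]`, and the infimum of a finite
nonempty set of values is one of them. -/

open scoped ENNReal

/-- The `(min,+)`-convolution `(f₁ ⊕ f₂)(x) = inf_{x̄ ∈ [0,x]} (f₁(x̄) + f₂(x - x̄))`. -/
noncomputable def minPlusConv (f₁ f₂ : ℝ → ℝ≥0∞) (x : ℝ) : ℝ≥0∞ :=
  ⨅ y ∈ Set.Icc (0 : ℝ) x, f₁ y + f₂ (x - y)

open Set

theorem IsPiecewiseConstant.finite_image {t : ℝ} {f : ℝ → ℝ≥0∞} {p : ℕ}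
    (hf : IsPiecewiseConstant t f p) : (f '' Icc 0 t).Finite := by
  obtain ⟨-, x, y, hx0, hxp, -, hpiece, hft⟩ := hf
  refine ((finite_Iic p).image y).subset ?_
  rintro _ ⟨z, hz, rfl⟩
  rcases hz.2.eq_or_lt with rfl | hzt
  · exact ⟨p, mem_Iic.2 le_rfl, hft.symm⟩
  · have hz' : z ∈ Ico (x 0) (x p) := by rw [hx0, hxp]; exact ⟨hz.1, hzt⟩
    obtain ⟨i, hi, hzi⟩ := mem_iUnion₂.1 (Ico_subset_biUnion_Ico p x hz')
    have hip := Finset.mem_range.1 hi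
    exact ⟨i + 1, hip, (hpiece i hip z hzi).symm⟩

theorem exists_biInf_eq_of_finite_image {ι α : Type*} [CompleteLinearOrder α] {s : Set ι}
    {g : ι → α} (hs : s.Nonempty) (hg : (g '' s).Finite) : ∃ a ∈ s, ⨅ i ∈ s, g i = g a := by
  obtain ⟨a, ha, hga⟩ := (hs.image g).csInf_mem hg
  exact ⟨a, ha, by rw [← sInf_image, hga]⟩

theorem minPlusConv_attained_general
    (t : ℝ) (f₁ f₂ : ℝ → ℝ≥0∞)
    (hf₁ : ∃ p₁ : ℕ, IsPiecewiseConstant t f₁ p₁)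
    (hf₂ : ∃ p₂ : ℕ, IsPiecewiseConstant t f₂ p₂) :
    ∀ x ∈ Set.Icc (0 : ℝ) t, ∃ x' ∈ Set.Icc (0 : ℝ) x,
      minPlusConv f₁ f₂ x = f₁ x' + f₂ (x - x') := by
  intro x hx
  obtain ⟨p₁, hf₁⟩ := hf₁
  obtain ⟨p₂, hf₂⟩ := hf₂
  have hsums : (fun y ↦ f₁ y + f₂ (x - y)) '' Icc 0 x ⊆
      image2 (· + ·) (f₁ '' Icc 0 t) (f₂ '' Icc 0 t) := by
    rintro _ ⟨y, hy, rfl⟩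
    exact mem_image2_of_mem ⟨y, ⟨hy.1, hy.2.trans hx.2⟩, rfl⟩
      ⟨x - y, ⟨by linarith [hy.2], by linarith [hy.1, hx.2]⟩, rfl⟩
  exact exists_biInf_eq_of_finite_image ⟨0, le_rfl, hx.1⟩
    ((hf₁.finite_image.image2 _ hf₂.finite_image).subset hsums)

theorem minPlusConv_attained
    (t : ℝ) (ht : 0 < t) (f₁ f₂ : ℝ → ℝ≥0∞)
    (hf₁ : ∃ p₁ : ℕ, IsPiecewiseConstant t f₁ p₁)
    (hf₂ : ∃ p₂ : ℕ, IsPiecewiseConstant t f₂ p₂) :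
    ∀ x ∈ Set.Icc (0 : ℝ) t, ∃ x' ∈ Set.Icc (0 : ℝ) x,
      minPlusConv f₁ f₂ x = f₁ x' + f₂ (x - x') :=
  minPlusConv_attained_general t f₁ f₂ hf₁ hf₂
end

section
/- Let I be a finite set and E ⊆ I × I a relation whose directed graph is acyclic. For i ∈ I let In(i) := {i' ∈ I : (i',i) ∈ E}, and let ℓ(i) denote the level of i, i.e., the maximal length (number of edges) of a directed E-path ending at i. Let J be a set, let α ≥ 1 be a real, and for each i ∈ I let P_i be a map taking families (F(i'))_{i' ∈ In(i)} of functions J → [0,+∞] to a function J → [0,+∞]. Suppose: (a) DP : I → (J → [0,+∞]) satisfies DP(i) = P_i((DP(i'))_{i' ∈ In(i)}) for all i ∈ I; (b) each P_i is sensitivity-preserving, meaning that for every real β ≥ 1 and every family F with DP(i') ≤ F(i') ≤ β·DP(i') pointwise for all i' ∈ In(i), one has DP(i) ≤ P_i(F) ≤ β·DP(i) pointwise; (c) ADP : I → (J → [0,+∞]) satisfies P_i((ADP(i'))_{i' ∈ In(i)}) ≤ ADP(i) ≤ α·P_i((ADP(i'))_{i' ∈ In(i)}) pointwise for all i ∈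 I. Then for every i ∈ I of level ℓ(i), DP(i) ≤ ADP(i) ≤ α^{ℓ(i)+1}·DP(i) pointwise. -/
open scoped ENNReal

/-! Acyclicity of `E` over a finite vertex set bounds the lengths of paths, so `level` strictly
increases along every edge, and the bounds follow by well-founded induction on it. If every
predecessor `i'` of `i` satisfies `DP i' ≤ ADP i' ≤ α ^ level E i * DP i'`, sensitivity
preservation with `β = α ^ level E i` gives `DP i ≤ P i ADP ≤ α ^ level E i * DP i`, and the
approximation step at `i` costs one more factor `α`. -/

/-- There is a directed `E`-path with `n` edges ending at `i`. -/
def HasPathEnding {I : Type*} (E : I → I → Prop) (n : ℕ) (i : I) : Prop :=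
  ∃ c : ℕ → I, c n = i ∧ ∀ m, m < n → E (c m) (c (m + 1))

/-- The level of `i`: the maximal number of edges on a directed `E`-path ending at `i`. -/
noncomputable def level {I : Type*} (E : I → I → Prop) (i : I) : ℕ :=
  sSup {n | HasPathEnding E n i}

section Paths

variable {I : Type*} {E : I → I → Prop}

theorem transGen_of_forall_lt_succ {n : ℕ} {c : ℕ → I}
    (hc : ∀ m, m < n → E (c m) (c (m + 1))) {a b : ℕ} (hab : a < b) (hbn : b ≤ n) :
    Relation.TransGen E (c a) (c b) := by
  induction b, hab using Nat.le_induction with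
  | base => exact .single (hc a (by omega))
  | succ b hab ih => exact (ih (by omega)).tail (hc b (by omega))

theorem HasPathEnding.lt_card [Fintype I] (hacyclic : ∀ i, ¬ Relation.TransGen E i i)
    {n : ℕ} {i : I} (h : HasPathEnding E n i) : n < Fintype.card I := by
  obtain ⟨c, -, hc⟩ := h
  have hinj : Function.Injective (fun m : Fin (n + 1) => c m) := by
    intro a b (hab : c a = c b)
    by_contra hne
    rcases Fin.lt_or_lt_of_ne hne with h | h <;>
      exact hacyclic _ (hab ▸ transGen_of_forall_lt_succ hc h (by omega))
  simpa using Fintype.card_le_of_injective _ hinj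

theorem HasPathEnding.snoc {n : ℕ} {i j : I} (h : HasPathEnding E n j) (hji : E j i) :
    HasPathEnding E (n + 1) i := by
  obtain ⟨c, hcn, hc⟩ := h
  refine ⟨fun m => if m ≤ n then c m else i, by simp, fun m hm => ?_⟩
  rcases Nat.lt_or_eq_of_le (Nat.lt_succ_iff.mp hm) with hlt | rfl
  · simpa [hlt.le, Nat.succ_le_of_lt hlt] using hc m hlt
  · simpa [hcn] using hji

theorem hasPathEnding_zero (i : I) : HasPathEnding E 0 i :=
  ⟨fun _ => i, rfl, fun _ h => absurd h (Nat.not_lt_zero _)⟩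

variable [Fintype I]

theorem bddAbove_setOf_hasPathEnding (hacyclic : ∀ i, ¬ Relation.TransGen E i i) (i : I) :
    BddAbove {n | HasPathEnding E n i} :=
  ⟨Fintype.card I, fun _ h => (h.lt_card hacyclic).le⟩

theorem hasPathEnding_level (hacyclic : ∀ i, ¬ Relation.TransGen E i i) (i : I) :
    HasPathEnding E (level E i) i :=
  Nat.sSup_mem ⟨0, hasPathEnding_zero i⟩ (bddAbove_setOf_hasPathEnding hacyclic i)

theorem level_lt_level (hacyclic : ∀ i, ¬ Relation.TransGen E i i) {i j : I}
    (hji : E j i) : level E j < level E i :=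
  le_csSup (bddAbove_setOf_hasPathEnding hacyclic i) ((hasPathEnding_level hacyclic j).snoc hji)

end Paths

theorem dp_sensitivity_approx_of_rank {I J : Type*} {E : I → I → Prop}
    (rank : I → ℕ) (hrank : ∀ {i j}, E j i → rank j < rank i) {α : ℝ} (hα : 1 ≤ α)
    (P : (i : I) → (({j // E j i} → J → ℝ≥0∞) → J → ℝ≥0∞)) (DP ADP : I → J → ℝ≥0∞)
    (hsens : ∀ i, ∀ β : ℝ, 1 ≤ β →
      ∀ F : {j // E j i} → J → ℝ≥0∞,
        (∀ i' (x : J), DP i'.1 x ≤ F i' x ∧ F i' x ≤ ENNReal.ofReal β * DP i'.1 x) →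
        ∀ x : J, DP i x ≤ P i F x ∧ P i F x ≤ ENNReal.ofReal β * DP i x)
    (hADP : ∀ i (x : J),
      P i (fun i' => ADP i'.1) x ≤ ADP i x ∧
      ADP i x ≤ ENNReal.ofReal α * P i (fun i' => ADP i'.1) x) (i : I) (x : J) :
    DP i x ≤ ADP i x ∧ ADP i x ≤ ENNReal.ofReal α ^ (rank i + 1) * DP i x := by
  have hα₀ : 0 ≤ α := zero_le_one.trans hα
  induction i using (InvImage.wf rank wellFounded_lt).induction generalizing x with
  | _ i ih =>
  have hpred : ∀ (i' : {j // E j i}) (y : J),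
      DP i'.1 y ≤ ADP i'.1 y ∧ ADP i'.1 y ≤ ENNReal.ofReal (α ^ rank i) * DP i'.1 y := by
    intro i' y
    have hlt := hrank i'.2
    obtain ⟨hlow, hupp⟩ := ih i'.1 hlt y
    refine ⟨hlow, hupp.trans (mul_le_mul_left ?_ _)⟩
    rw [ENNReal.ofReal_pow hα₀]
    exact pow_le_pow_right₀ (ENNReal.one_le_ofReal.mpr hα) hlt
  obtain ⟨hPlow, hPupp⟩ := hsens i _ (one_le_pow₀ hα) _ hpred x
  obtain ⟨hAlow, hAupp⟩ := hADP i x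
  refine ⟨hPlow.trans hAlow, ?_⟩
  calc ADP i x ≤ ENNReal.ofReal α * P i (fun i' => ADP i'.1) x := hAupp
    _ ≤ ENNReal.ofReal α * (ENNReal.ofReal α ^ rank i * DP i x) := by
      rw [← ENNReal.ofReal_pow hα₀]
      exact mul_le_mul_right hPupp _
    _ = ENNReal.ofReal α ^ (rank i + 1) * DP i x := by ring

theorem dp_sensitivity_approx_general
    {I : Type*} [Fintype I] {J : Type*}
    (E : I → I → Prop)
    (hacyclic : ∀ i, ¬ Relation.TransGen E i i)
    (α : ℝ) (hα : 1 ≤ α)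
    (P : (i : I) → (({j // E j i} → J → ℝ≥0∞) → J → ℝ≥0∞))
    (DP ADP : I → J → ℝ≥0∞)
    -- (b) each `P i` is sensitivity-preserving
    (hsens : ∀ i, ∀ β : ℝ, 1 ≤ β →
      ∀ F : {j // E j i} → J → ℝ≥0∞,
        (∀ i' (x : J), DP i'.1 x ≤ F i' x ∧ F i' x ≤ ENNReal.ofReal β * DP i'.1 x) →
        ∀ x : J, DP i x ≤ P i F x ∧ P i F x ≤ ENNReal.ofReal β * DP i x)
    -- (c) `ADP` is an `α`-approximate evaluation of the procedures
    (hADP : ∀ i (x : J),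
      P i (fun i' => ADP i'.1) x ≤ ADP i x ∧
      ADP i x ≤ ENNReal.ofReal α * P i (fun i' => ADP i'.1) x) :
    ∀ i (x : J),
      DP i x ≤ ADP i x ∧
      ADP i x ≤ ENNReal.ofReal α ^ (level E i + 1) * DP i x :=
  dp_sensitivity_approx_of_rank (level E) (level_lt_level hacyclic) hα P DP ADP hsens hADP

theorem dp_sensitivity_approx
    {I : Type*} [Fintype I] {J : Type*}
    (E : I → I → Prop)
    (hacyclic : ∀ i, ¬ Relation.TransGen E i i)
    (α : ℝ) (hα : 1 ≤ α)
    (P : (i : I) → (({j // E j i} → J → ℝ≥0∞) → J → ℝ≥0∞))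
    (DP ADP : I → J → ℝ≥0∞)
    -- (a) `DP` is computed by the procedures `P i` from the rows it depends on
    (hDP : ∀ i, DP i = P i (fun i' => DP i'.1))
    -- (b) each `P i` is sensitivity-preserving
    (hsens : ∀ i, ∀ β : ℝ, 1 ≤ β →
      ∀ F : {j // E j i} → J → ℝ≥0∞,
        (∀ i' (x : J), DP i'.1 x ≤ F i' x ∧ F i' x ≤ ENNReal.ofReal β * DP i'.1 x) →
        ∀ x : J, DP i x ≤ P i F x ∧ P i F x ≤ ENNReal.ofReal β * DP i x)
    -- (c) `ADP` is an `α`-approximate evaluation of the procedures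
    (hADP : ∀ i (x : J),
      P i (fun i' => ADP i'.1) x ≤ ADP i x ∧
      ADP i x ≤ ENNReal.ofReal α * P i (fun i' => ADP i'.1) x) :
    ∀ i (x : J),
      DP i x ≤ ADP i x ∧
      ADP i x ≤ ENNReal.ofReal α ^ (level E i + 1) * DP i x :=
  dp_sensitivity_approx_general E hacyclic α hα P DP ADP hsens hADP
end

section
/- Let V_G be a finite set with a symmetric capacity function cap_G : V_G × V_G → [0,∞) satisfying cap_G(x,x) = 0 for all x. Let T be a finite rooted tree whose set of leaves is exactly V_G; for a vertex v of T let V_v ⊆ V_G denote the set of leaves in the subtree rooted at v, and for a tree edge e = {u,v} with v the child endpoint define cap_T(e) := Σ_{a ∈ V_v} Σ_{b ∈ V_G∖V_v} cap_G(a,b). Then for every subset S_T of the vertices of T, letting S := S_T ∩ V_G, the total capacity of tree edges cut by S_T is at least the capacity of the cut (S, V_G∖S) in G: Σ_{e = {u,v} edge of T with exactly one endpoint in S_T} cap_T(e) ≥ Σ_{a ∈ S} Σ_{b ∈ V_G∖S} cap_G(a,b). -/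
/-!
Take `a ∈ S`, `b ∈ V_G \ S` and, replacing `S_T` by its complement if necessary, assume the root
lies in `S_T`. The path from `b` to the root enters `S_T` along a first tree edge `(v, par v)`.
If `a` is not below `v`, that edge separates `a` from `b`; otherwise the path from `a` up to `v`
leaves `S_T` along an edge `(w, par w)`, and `b` cannot lie below `w`, since then `v` and `w`
would lie strictly below each other. So every pair of the cut `(S, V_G \ S)` is separated by some
cut tree edge `v`, and the pairs separated by `v`, oriented to start in `V_v`, are distinct pairs
of `V_v × (V_G \ V_v)`; summing over the cut edges bounds the cut capacity by `Σ cap_T(e)`.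
-/

open scoped Classical

theorem Nat.exists_forall_le_not_and_succ {P : ℕ → Prop} {m : ℕ} (h0 : ¬P 0) (hm : P m) :
    ∃ j < m, (∀ i ≤ j, ¬P i) ∧ P (j + 1) := by
  have hex : ∃ k, P k := ⟨m, hm⟩
  have hpos : Nat.find hex ≠ 0 := fun h => h0 (h ▸ Nat.find_spec hex)
  refine ⟨Nat.find hex - 1, by have := Nat.find_min' hex hm; omega,
    fun i hi => Nat.find_min hex (by omega), ?_⟩
  rw [Nat.sub_add_cancel (Nat.one_le_iff_ne_zero.2 hpos)]
  exact Nat.find_spec hex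

theorem Function.IsPeriodicPt.eq_of_iterate_eq_isFixedPt {α : Type*} {f : α → α} {x y : α}
    {k N : ℕ} (hx : IsPeriodicPt f k x) (hk : 0 < k) (hy : IsFixedPt f y)
    (hxy : f^[N] x = y) : x = y :=
  calc x = f^[k * N] x := (hx.mul_const N).eq.symm
    _ = f^[k * N - N] (f^[N] x) := by
      rw [← iterate_add_apply, Nat.sub_add_cancel (Nat.le_mul_of_pos_left N hk)]
    _ = y := by rw [hxy, iterate_fixed hy]

section RootedTree

variable {V : Type*} {par : V → V} {r : V}

theorem exists_cut_edge_separating_of_root_mem (hroot : par r = r)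
    (hreach : ∀ v, ∃ m : ℕ, par^[m] v = r) {S : Set V} (hr : r ∈ S) {a b : V}
    (ha : a ∈ S) (hb : b ∉ S) :
    ∃ v ≠ r, Xor (v ∈ S) (par v ∈ S) ∧
      Xor (∃ m : ℕ, par^[m] a = v) (∃ m : ℕ, par^[m] b = v) := by
  obtain ⟨m, hm⟩ := hreach b
  obtain ⟨j, -, hj_out, hj_in⟩ :=
    Nat.exists_forall_le_not_and_succ (P := fun i => par^[i] b ∈ S) hb (hm ▸ hr)
  set v := par^[j] b with hv_def
  have hv : v ∉ S := hj_out j le_rfl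
  have hpv : par v ∈ S := Function.iterate_succ_apply' par j b ▸ hj_in
  have hvr : v ≠ r := fun h => hv (h ▸ hr)
  by_cases hav : ∃ i : ℕ, par^[i] a = v
  swap
  · exact ⟨v, hvr, Or.inr ⟨hpv, hv⟩, Or.inr ⟨⟨j, rfl⟩, hav⟩⟩
  -- `a` lies below `v`: cut the path from `a` up to `v` where it first leaves `S`
  obtain ⟨i, hi⟩ := hav
  obtain ⟨k, hki, hk_in, hk_out⟩ := Nat.exists_forall_le_not_and_succ
    (P := fun t => par^[t] a ∉ S) (not_not.2 ha) (hi ▸ hv)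
  set w := par^[k] a with hw_def
  have hw : w ∈ S := not_not.1 (hk_in k le_rfl)
  have hpw : par w ∉ S := Function.iterate_succ_apply' par k a ▸ hk_out
  have hwr : w ≠ r := fun h => hpw (by rwa [h, hroot, ← h])
  refine ⟨w, hwr, Or.inl ⟨hw, hpw⟩, Or.inl ⟨⟨k, rfl⟩, ?_⟩⟩
  rintro ⟨l, hl⟩
  -- then `w` would lie strictly below `v` and strictly above it
  have hjl : j < l := by
    by_contra! hlj
    exact hj_out l hlj (hl ▸ hw)
  have hwv : par^[i - k] w = v := by
    rw [hw_def, ← Function.iterate_add_apply, Nat.sub_add_cancel hki.le, hi]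
  have hvw : par^[l - j] v = w := by
    rw [hv_def, ← Function.iterate_add_apply, Nat.sub_add_cancel hjl.le, hl]
  have hcycle : Function.IsPeriodicPt par ((l - j) + (i - k)) w := by
    rw [Function.IsPeriodicPt, Function.IsFixedPt, Function.iterate_add_apply, hwv, hvw]
  obtain ⟨N, hN⟩ := hreach w
  exact hwr (hcycle.eq_of_iterate_eq_isFixedPt (by omega) hroot hN)

theorem exists_cut_edge_separating (hroot : par r = r)
    (hreach : ∀ v, ∃ m : ℕ, par^[m] v = r) {S : Set V} {a b : V}
    (ha : a ∈ S) (hb : b ∉ S) :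
    ∃ v ≠ r, Xor (v ∈ S) (par v ∈ S) ∧
      Xor (∃ m : ℕ, par^[m] a = v) (∃ m : ℕ, par^[m] b = v) := by
  by_cases hr : r ∈ S
  · exact exists_cut_edge_separating_of_root_mem hroot hreach hr ha hb
  · obtain ⟨v, hvr, hcut, hsep⟩ := exists_cut_edge_separating_of_root_mem (S := Sᶜ)
      hroot hreach hr hb (not_not.2 ha)
    exact ⟨v, hvr, xor_not_not.1 hcut, xor_comm _ _ ▸ hsep⟩

end RootedTree

section Cuts

variable {α ι M : Type*} [AddCommMonoid M] [PartialOrder M] [IsOrderedAddMonoid M]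

theorem Finset.sum_le_sum_sum_filter_of_forall_exists (s : Finset α) (t : Finset ι)
    (sep : ι → α → Prop) [∀ i, DecidablePred (sep i)] (f : α → M)
    (hf : ∀ a ∈ s, 0 ≤ f a) (hcover : ∀ a ∈ s, ∃ i ∈ t, sep i a) :
    ∑ a ∈ s, f a ≤ ∑ i ∈ t, ∑ a ∈ s with sep i a, f a := by
  simp_rw [Finset.sum_filter]
  rw [Finset.sum_comm]
  refine Finset.sum_le_sum fun a ha => ?_
  obtain ⟨i, hi, hsep⟩ := hcover a ha
  calc f a = if sep i a then f a else 0 := (if_pos hsep).symm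
    _ ≤ ∑ j ∈ t, if sep j a then f a else 0 :=
      Finset.single_le_sum (f := fun j => if sep j a then f a else 0)
        (fun j _ => by split_ifs <;> simp [hf a ha]) hi

theorem sum_filter_xor_le_sum_cut [DecidableEq α] (w : α → α → M)
    (hsym : ∀ a b, w a b = w b a) (hnonneg : ∀ a b, 0 ≤ w a b) {U S A : Finset α}
    (hS : S ⊆ U) :
    ∑ p ∈ S ×ˢ (U \ S) with Xor (p.1 ∈ A) (p.2 ∈ A), w p.1 p.2 ≤
      ∑ p ∈ A ×ˢ (U \ A), w p.1 p.2 := by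
  set Q := {p ∈ S ×ˢ (U \ S) | Xor (p.1 ∈ A) (p.2 ∈ A)}
  set e : α × α → α × α := fun p => if p.1 ∈ A then p else p.swap
  have he_inj : Set.InjOn e Q := by
    intro p hp q hq hpq
    simp only [Q, e, Finset.coe_filter, Finset.mem_product, Finset.mem_sdiff] at hp hq hpq
    split_ifs at hpq <;> grind
  have he_maps : ∀ p ∈ Q, e p ∈ A ×ˢ (U \ A) := by
    intro p hp
    simp only [Q, e, Finset.mem_filter, Finset.mem_product, Finset.mem_sdiff] at hp ⊢
    split_ifs <;> grind
  calc ∑ p ∈ Q, w p.1 p.2 = ∑ p ∈ Q, w (e p).1 (e p).2 :=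
        Finset.sum_congr rfl fun p _ => by simp only [e]; split_ifs <;> simp [hsym]
    _ = ∑ q ∈ Q.image e, w q.1 q.2 := (Finset.sum_image (f := fun q => w q.1 q.2) he_inj).symm
    _ ≤ ∑ p ∈ A ×ˢ (U \ A), w p.1 p.2 :=
        Finset.sum_le_sum_of_subset_of_nonneg (Finset.image_subset_iff.2 he_maps)
          fun _ _ _ => hnonneg _ _

end Cuts

theorem racke_tree_cut_lower_bound_general
    (V : Type*) [Fintype V] [DecidableEq V]
    (capG : V → V → ℝ)
    (hsym : ∀ a b, capG a b = capG b a)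
    (hnonneg : ∀ a b, 0 ≤ capG a b)
    -- the tree `T`: root `r` and parent map `par`, every vertex reaches the root
    (r : V) (par : V → V)
    (hroot : par r = r)
    (hreach : ∀ v, ∃ m : ℕ, par^[m] v = r)
    (VG : Finset V)
    (ST : Finset V) :
    -- the capacity of the cut `(S, V_G \ S)` in `G`, where `S = S_T ∩ V_G`, is at most
    -- the total capacity of the tree edges cut by `S_T`
    ∑ a ∈ ST ∩ VG, ∑ b ∈ VG \ (ST ∩ VG), capG a b ≤
      ∑ v ∈ Finset.univ.filter (fun v => v ≠ r ∧ Xor' (v ∈ ST) (par v ∈ ST)),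
        ∑ a ∈ VG.filter (fun a => ∃ m : ℕ, par^[m] a = v),
          ∑ b ∈ VG \ VG.filter (fun a => ∃ m : ℕ, par^[m] a = v), capG a b := by
  set A : V → Finset V := fun v => VG.filter (fun a => ∃ m : ℕ, par^[m] a = v)
  set C := Finset.univ.filter (fun v => v ≠ r ∧ Xor' (v ∈ ST) (par v ∈ ST))
  have hsep : ∀ p ∈ (ST ∩ VG) ×ˢ (VG \ (ST ∩ VG)), ∃ v ∈ C, Xor (p.1 ∈ A v) (p.2 ∈ A v) := by
    rintro ⟨a, b⟩ hp
    simp only [Finset.mem_product, Finset.mem_inter, Finset.mem_sdiff, not_and] at hp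
    obtain ⟨⟨haST, haVG⟩, hbVG, hbST⟩ := hp
    obtain ⟨v, hvr, hcut, hsepv⟩ := exists_cut_edge_separating (S := ↑ST) hroot hreach
      (Finset.mem_coe.2 haST) (mt Finset.mem_coe.1 fun h => hbST h hbVG)
    refine ⟨v, Finset.mem_filter.2 ⟨Finset.mem_univ v, hvr, hcut⟩, ?_⟩
    simpa [A, haVG, hbVG] using hsepv
  simp_rw [← Finset.sum_product']
  calc ∑ p ∈ (ST ∩ VG) ×ˢ (VG \ (ST ∩ VG)), capG p.1 p.2
      ≤ ∑ v ∈ C, ∑ p ∈ (ST ∩ VG) ×ˢ (VG \ (ST ∩ VG)) with Xor (p.1 ∈ A v) (p.2 ∈ A v),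
          capG p.1 p.2 :=
        Finset.sum_le_sum_sum_filter_of_forall_exists _ _ _ _ (fun _ _ => hnonneg _ _) hsep
    _ ≤ ∑ v ∈ C, ∑ p ∈ A v ×ˢ (VG \ A v), capG p.1 p.2 :=
        Finset.sum_le_sum fun v _ =>
          sum_filter_xor_le_sum_cut capG hsym hnonneg Finset.inter_subset_right

theorem racke_tree_cut_lower_bound
    (V : Type*) [Fintype V] [DecidableEq V]
    (capG : V → V → ℝ)
    (hsym : ∀ a b, capG a b = capG b a)
    (hnonneg : ∀ a b, 0 ≤ capG a b)
    (hdiag : ∀ a, capG a a = 0)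
    -- the tree `T`: root `r` and parent map `par`, every vertex reaches the root
    (r : V) (par : V → V)
    (hroot : par r = r)
    (hreach : ∀ v, ∃ m : ℕ, par^[m] v = r)
    -- the set of leaves of `T` is exactly `V_G`
    (VG : Finset V)
    (hleaf : ∀ v, v ∈ VG ↔ ∀ u, par u = v → u = v)
    (ST : Finset V) :
    -- the capacity of the cut `(S, V_G \ S)` in `G`, where `S = S_T ∩ V_G`, is at most
    -- the total capacity of the tree edges cut by `S_T`
    ∑ a ∈ ST ∩ VG, ∑ b ∈ VG \ (ST ∩ VG), capG a b ≤
      ∑ v ∈ Finset.univ.filter (fun v => v ≠ r ∧ Xor' (v ∈ ST) (par v ∈ ST)),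
        ∑ a ∈ VG.filter (fun a => ∃ m : ℕ, par^[m] a = v),
          ∑ b ∈ VG \ VG.filter (fun a => ∃ m : ℕ, par^[m] a = v), capG a b :=
  racke_tree_cut_lower_bound_general V capG hsym hnonneg r par hroot hreach VG ST
end

section
/- Let ε ∈ (0, 1/2), let s ≥ 1 be an integer with s < 1/(8ε(1+2ε)), let n ≥ 1 be an integer, and let k be a real number with n/(4s) ≤ k ≤ n. Consider the knapsack instance with budget B = n consisting of n small items, each of weight 1 and price 1, and one heavy item of weight n − k and price n − k + 2εn. Suppose S is a feasible solution (a set of items of total weight at most n) whose total price is at least (1−ε)(1+2ε)n. Then S contains the heavy item and at least one small item. -/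
theorem Finset.sum_option_elim_congr_of_none_notMem {ι R : Type*} [AddCommMonoid R]
    {S : Finset (Option ι)} (h : none ∉ S) (a b : R) (f : ι → R) :
    ∑ o ∈ S, o.elim a f = ∑ o ∈ S, o.elim b f :=
  Finset.sum_congr rfl fun o ho => by
    cases o with
    | none => exact absurd ho h
    | some => rfl

theorem Finset.eq_singleton_none_of_forall_some_notMem {ι : Type*} {S : Finset (Option ι)}
    (hnone : none ∈ S) (hsome : ∀ i, some i ∉ S) : S = {none} :=
  Finset.eq_singleton_iff_unique_mem.2 ⟨hnone, fun o ho => by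
    cases o with
    | none => rfl
    | some i => exact absurd ho (hsome i)⟩

theorem one_lt_one_sub_mul_one_add_two_mul {ε : ℝ} (hε0 : 0 < ε) (hε1 : ε < 1 / 2) :
    1 < (1 - ε) * (1 + 2 * ε) := by
  nlinarith

theorem mul_one_add_two_mul_lt_div_four_mul {ε t x : ℝ} (hε0 : 0 < ε) (ht : 0 < t)
    (htε : t < 1 / (8 * ε * (1 + 2 * ε))) (hx : 0 < x) :
    ε * (1 + 2 * ε) * x < x / (4 * t) := by
  have hεt : t * (8 * ε * (1 + 2 * ε)) < 1 := (lt_div_iff₀ (by positivity)).1 htε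
  rw [lt_div_iff₀ (by positivity)]
  nlinarith

theorem approx_knapsack_solution_contains_heavy_and_small_general
    (ε : ℝ) (hε0 : 0 < ε) (hε1 : ε < 1 / 2)
    (s : ℕ) (hs : 1 ≤ s) (hsε : (s : ℝ) < 1 / (8 * ε * (1 + 2 * ε)))
    (n : ℕ) (hn : 1 ≤ n)
    (k : ℝ) (hk1 : (n : ℝ) / (4 * s) ≤ k)
    (S : Finset (Option (Fin n)))
    (hfeas : ∑ o ∈ S, (Option.elim o ((n : ℝ) - k) (fun _ => 1)) ≤ (n : ℝ))
    (hval : (1 - ε) * (1 + 2 * ε) * (n : ℝ) ≤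
      ∑ o ∈ S, (Option.elim o ((n : ℝ) - k + 2 * ε * n) (fun _ => 1))) :
    none ∈ S ∧ ∃ i : Fin n, some i ∈ S := by
  have hn' : (0 : ℝ) < n := Nat.cast_pos.2 hn
  -- Without the heavy item, value equals weight, which is at most `n`.
  have hnone : none ∈ S := by
    by_contra h
    rw [Finset.sum_option_elim_congr_of_none_notMem h _ ((n : ℝ) - k)] at hval
    have := mul_lt_mul_of_pos_right (one_lt_one_sub_mul_one_add_two_mul hε0 hε1) hn'
    linarith
  refine ⟨hnone, ?_⟩
  -- The heavy item alone falls short because `k > ε(1 + 2ε)n`.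
  by_contra! hsome
  rw [Finset.eq_singleton_none_of_forall_some_notMem hnone hsome, Finset.sum_singleton] at hval
  have := mul_one_add_two_mul_lt_div_four_mul hε0 (Nat.cast_pos.2 hs) hsε hn'
  simp only [Option.elim] at hval
  linarith

/-- Items: `some i` is the `i`-th small item (weight 1, price 1);
`none` is the heavy item (weight `n - k`, price `n - k + 2εn`). -/
theorem approx_knapsack_solution_contains_heavy_and_small
    (ε : ℝ) (hε0 : 0 < ε) (hε1 : ε < 1 / 2)
    (s : ℕ) (hs : 1 ≤ s) (hsε : (s : ℝ) < 1 / (8 * ε * (1 + 2 * ε)))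
    (n : ℕ) (hn : 1 ≤ n)
    (k : ℝ) (hk1 : (n : ℝ) / (4 * s) ≤ k) (hk2 : k ≤ n)
    (S : Finset (Option (Fin n)))
    (hfeas : ∑ o ∈ S, (Option.elim o ((n : ℝ) - k) (fun _ => 1)) ≤ (n : ℝ))
    (hval : (1 - ε) * (1 + 2 * ε) * (n : ℝ) ≤
      ∑ o ∈ S, (Option.elim o ((n : ℝ) - k + 2 * ε * n) (fun _ => 1))) :
    none ∈ S ∧ ∃ i : Fin n, some i ∈ S :=
  approx_knapsack_solution_contains_heavy_and_small_general ε hε0 hε1 s hs hsε n hn k hk1 S hfeas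
    hval
end
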